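/- Let y: ℂ* → ℂ⁴ satisfy the ODE system dy/dz = (𝒰 + μ/z)y, where 𝒰 is the matrix with rows (0,0,3,0),(3,0,0,3),(0,6,0,0),(0,0,3,0) and μ = diag(−3/2, −1/2, 1/2, 3/2). If one writes y₄(z) = z^{3/2}φ(z), then φ satisfies the scalar ODE D⁴φ − 108 z³ Dφ − 162 z³ φ = 0 with D = z·d/dz, and conversely y₁, y₂, y₃ are determined from φ by y₃ = (1/3) z^{3/2} φ', y₂ = (1/18)(z^{3/2} φ'' + z^{1/2} φ'), y₁ = (z² φ''' + φ' + 3z φ'' − 54 z² φ)/(54 √z). -/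

import Mathlib

/-! Read from the fourth equation to the second, the system is triangular: differentiating
`y₄ = z^{3/2} φ` and comparing with the fourth equation gives `y₃`, and the third and second
equations then give `y₂` and `y₁` in the same way; all that is needed about `√z` is
`d√z/dz = √z / (2z)`, which follows from `(√z)² = z`. Substituting these into the first
equation gives the scalar ODE. The key identity is `D³φ = 54 z^{3/2} y₁ + 54 z³ φ`: it lets one
differentiate `D³φ` through the first equation, so `φ'''` is never differentiated. -/

open Set

section

variable {𝕜 : Type*} [NontriviallyNormedField 𝕜] {r : 𝕜 → 𝕜} {s : Set 𝕜} {z : 𝕜}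

theorem HasDerivAt.eq_of_eqOn {F : Type*} [NormedAddCommGroup F] [NormedSpace 𝕜 F]
    {f g : 𝕜 → F} {a b : F} (hs : IsOpen s) (hz : z ∈ s) (hfg : EqOn f g s)
    (hf : HasDerivAt f a z) (hg : HasDerivAt g b z) : a = b :=
  hf.unique (hg.congr_of_eventuallyEq (hfg.eventuallyEq_of_mem (hs.mem_nhds hz)))

structure IsSqrtOn (r : 𝕜 → 𝕜) (s : Set 𝕜) : Prop where
  differentiableOn : DifferentiableOn 𝕜 r s
  sq_eq : ∀ z ∈ s, r z ^ 2 = z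

namespace IsSqrtOn

theorem two_mul_mul_deriv (hr : IsSqrtOn r s) (hs : IsOpen s) (hz : z ∈ s) :
    2 * r z * deriv r z = 1 := by
  simpa using ((hr.differentiableOn.hasDerivAt (hs.mem_nhds hz)).pow 2).eq_of_eqOn hs hz
    hr.sq_eq (hasDerivAt_id z)

theorem two_ne_zero (hr : IsSqrtOn r s) (hs : IsOpen s) (hz : z ∈ s) : (2 : 𝕜) ≠ 0 :=
  left_ne_zero_of_mul (left_ne_zero_of_mul_eq_one (hr.two_mul_mul_deriv hs hz))

theorem apply_ne_zero (hr : IsSqrtOn r s) (hs : IsOpen s) (hz : z ∈ s) : r z ≠ 0 :=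
  right_ne_zero_of_mul (left_ne_zero_of_mul_eq_one (hr.two_mul_mul_deriv hs hz))

theorem ne_zero_of_mem (hr : IsSqrtOn r s) (hs : IsOpen s) (hz : z ∈ s) : z ≠ 0 := by
  rw [← hr.sq_eq z hz]
  exact pow_ne_zero 2 (hr.apply_ne_zero hs hz)

theorem hasDerivAt (hr : IsSqrtOn r s) (hs : IsOpen s) (hz : z ∈ s) :
    HasDerivAt r (r z / (2 * z)) z := by
  have hderiv : deriv r z = r z / (2 * z) := by
    rw [eq_div_iff (mul_ne_zero (hr.two_ne_zero hs hz) (hr.ne_zero_of_mem hs hz))]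
    linear_combination r z * hr.two_mul_mul_deriv hs hz - 2 * deriv r z * hr.sq_eq z hz
  exact hderiv ▸ hr.differentiableOn.hasDerivAt (hs.mem_nhds hz)

theorem hasDerivAt_mul_self (hr : IsSqrtOn r s) (hs : IsOpen s) (hz : z ∈ s) :
    HasDerivAt (fun w => w * r w) (3 / 2 * r z) z := by
  have h2 := hr.two_ne_zero hs hz
  have hz0 := hr.ne_zero_of_mem hs hz
  have h := (hasDerivAt_id' z).fun_mul (hr.hasDerivAt hs hz)
  rwa [show 1 * r z + z * (r z / (2 * z)) = 3 / 2 * r z by field_simp; ring] at h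

end IsSqrtOn

end

noncomputable def eulerOp (f : ℂ → ℂ) (z : ℂ) : ℂ := z * deriv f z

theorem eulerOp_eq_of_eqOn {s : Set ℂ} {f g : ℂ → ℂ} {g' z : ℂ} (hs : IsOpen s) (hz : z ∈ s)
    (hfg : EqOn f g s) (hg : HasDerivAt g g' z) : eulerOp f z = z * g' := by
  rw [eulerOp, (hg.congr_of_eventuallyEq (hfg.eventuallyEq_of_mem (hs.mem_nhds hz))).deriv]

theorem hasDerivAt_eulerOp {f : ℂ → ℂ} {f'' z : ℂ} (hf : HasDerivAt (deriv f) f'' z) :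
    HasDerivAt (eulerOp f) (deriv f z + z * f'') z := by
  have h := (hasDerivAt_id' z).fun_mul hf
  rw [one_mul] at h
  exact h

namespace LG24

variable {s : Set ℂ} {r φ y₁ y₂ y₃ y₄ : ℂ → ℂ}

theorem y₃_eq (hs : IsOpen s) (hr : IsSqrtOn r s) (hφ : DifferentiableOn ℂ φ s)
    (hy₄ : ∀ z ∈ s, y₄ z = z * r z * φ z)
    (hode₄ : ∀ z ∈ s, HasDerivAt y₄ (3 * y₃ z + 3 / (2 * z) * y₄ z) z) :
    ∀ z ∈ s, y₃ z = 1 / 3 * (z * r z) * deriv φ z := by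
  intro z hz
  have h := (hode₄ z hz).eq_of_eqOn hs hz hy₄
    ((hr.hasDerivAt_mul_self hs hz).fun_mul (hφ.hasDerivAt (hs.mem_nhds hz)))
  have hz0 := hr.ne_zero_of_mem hs hz
  rw [hy₄ z hz] at h
  field_simp at h ⊢
  linear_combination h / 2

theorem y₂_eq (hs : IsOpen s) (hr : IsSqrtOn r s) (hφ' : DifferentiableOn ℂ (deriv φ) s)
    (hy₃ : ∀ z ∈ s, y₃ z = 1 / 3 * (z * r z) * deriv φ z)
    (hode₃ : ∀ z ∈ s, HasDerivAt y₃ (6 * y₂ z + 1 / (2 * z) * y₃ z) z) :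
    ∀ z ∈ s, y₂ z = 1 / 18 * (z * r z * deriv (deriv φ) z + r z * deriv φ z) := by
  intro z hz
  have h := (hode₃ z hz).eq_of_eqOn hs hz hy₃
    (((hr.hasDerivAt_mul_self hs hz).const_mul (1 / 3)).fun_mul
      (hφ'.hasDerivAt (hs.mem_nhds hz)))
  have hz0 := hr.ne_zero_of_mem hs hz
  rw [hy₃ z hz] at h
  field_simp at h ⊢
  linear_combination h / 2

theorem y₁_eq (hs : IsOpen s) (hr : IsSqrtOn r s) (hφ' : DifferentiableOn ℂ (deriv φ) s)
    (hφ'' : DifferentiableOn ℂ (deriv (deriv φ)) s)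
    (hy₄ : ∀ z ∈ s, y₄ z = z * r z * φ z)
    (hy₂ : ∀ z ∈ s, y₂ z = 1 / 18 * (z * r z * deriv (deriv φ) z + r z * deriv φ z))
    (hode₂ : ∀ z ∈ s, HasDerivAt y₂ (3 * y₁ z + 3 * y₄ z - 1 / (2 * z) * y₂ z) z) :
    ∀ z ∈ s, y₁ z = (z ^ 2 * deriv (deriv (deriv φ)) z + deriv φ z
      + 3 * z * deriv (deriv φ) z - 54 * z ^ 2 * φ z) / (54 * r z) := by
  intro z hz
  have h := (hode₂ z hz).eq_of_eqOn hs hz hy₂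
    ((((hr.hasDerivAt_mul_self hs hz).fun_mul (hφ''.hasDerivAt (hs.mem_nhds hz))).fun_add
      ((hr.hasDerivAt hs hz).fun_mul (hφ'.hasDerivAt (hs.mem_nhds hz)))).const_mul (1 / 18))
  have hz0 := hr.ne_zero_of_mem hs hz
  have hr0 := hr.apply_ne_zero hs hz
  rw [hy₄ z hz, hy₂ z hz] at h
  field_simp at h ⊢
  apply mul_left_cancel₀ hr0
  linear_combination h / 2 + 54 * y₁ z * hr.sq_eq z hz

theorem scalar_ode (hs : IsOpen s) (hr : IsSqrtOn r s) (hφ : DifferentiableOn ℂ φ s)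
    (hφ' : DifferentiableOn ℂ (deriv φ) s) (hφ'' : DifferentiableOn ℂ (deriv (deriv φ)) s)
    (hy₃ : ∀ z ∈ s, y₃ z = 1 / 3 * (z * r z) * deriv φ z)
    (hy₁ : ∀ z ∈ s, y₁ z = (z ^ 2 * deriv (deriv (deriv φ)) z + deriv φ z
      + 3 * z * deriv (deriv φ) z - 54 * z ^ 2 * φ z) / (54 * r z))
    (hode₁ : ∀ z ∈ s, HasDerivAt y₁ (3 * y₃ z - 3 / (2 * z) * y₁ z) z) :
    ∀ z ∈ s, eulerOp (eulerOp (eulerOp (eulerOp φ))) z - 108 * z ^ 3 * eulerOp φ z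
      - 162 * z ^ 3 * φ z = 0 := by
  have hD2 : EqOn (eulerOp (eulerOp φ))
      (fun w => w * deriv φ w + w ^ 2 * deriv (deriv φ) w) s := fun w hw => by
    rw [eulerOp_eq_of_eqOn hs hw (eqOn_refl _ _)
      (hasDerivAt_eulerOp (hφ'.hasDerivAt (hs.mem_nhds hw)))]
    ring
  have hD3 : EqOn (eulerOp (eulerOp (eulerOp φ)))
      (fun w => 54 * (w * r w) * y₁ w + 54 * w ^ 3 * φ w) s := fun w hw => by
    rw [eulerOp_eq_of_eqOn hs hw hD2
      (((hasDerivAt_id' w).fun_mul (hφ'.hasDerivAt (hs.mem_nhds hw))).fun_add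
        ((hasDerivAt_pow 2 w).fun_mul (hφ''.hasDerivAt (hs.mem_nhds hw))))]
    dsimp only
    rw [hy₁ w hw]
    have hr0 := hr.apply_ne_zero hs hw
    field_simp
    push_cast
    ring
  intro z hz
  rw [eulerOp_eq_of_eqOn hs hz hD3
    ((((hr.hasDerivAt_mul_self hs hz).const_mul 54).fun_mul (hode₁ z hz)).fun_add
      (((hasDerivAt_pow 3 z).const_mul 54).fun_mul (hφ.hasDerivAt (hs.mem_nhds hz)))),
    eulerOp, hy₃ z hz]
  have hz0 := hr.ne_zero_of_mem hs hz
  field_simp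
  linear_combination 108 * z ^ 3 * deriv φ z * hr.sq_eq z hz

end LG24

theorem LG24_qde_reduction_to_scalar_ODE_general
    (s : Set ℂ) (hs : IsOpen s)
    (y₁ y₂ y₃ y₄ φ z12 : ℂ → ℂ)
    (hz12 : DifferentiableOn ℂ z12 s)
    (hz12sq : ∀ z ∈ s, z12 z ^ 2 = z)
    (hφ : DifferentiableOn ℂ φ s)
    (hφ' : DifferentiableOn ℂ (deriv φ) s)
    (hφ'' : DifferentiableOn ℂ (deriv (deriv φ)) s)
    (hy₄ : ∀ z ∈ s, y₄ z = z * z12 z * φ z)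
    (hode₁ : ∀ z ∈ s, HasDerivAt y₁ (3 * y₃ z - 3 / (2 * z) * y₁ z) z)
    (hode₂ : ∀ z ∈ s, HasDerivAt y₂ (3 * y₁ z + 3 * y₄ z - 1 / (2 * z) * y₂ z) z)
    (hode₃ : ∀ z ∈ s, HasDerivAt y₃ (6 * y₂ z + 1 / (2 * z) * y₃ z) z)
    (hode₄ : ∀ z ∈ s, HasDerivAt y₄ (3 * y₃ z + 3 / (2 * z) * y₄ z) z) :
    let D : (ℂ → ℂ) → (ℂ → ℂ) := fun f z => z * deriv f z
    ∀ z ∈ s,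
      (D (D (D (D φ))) z - 108 * z ^ 3 * D φ z - 162 * z ^ 3 * φ z = 0) ∧
      y₃ z = (1 / 3) * (z * z12 z) * deriv φ z ∧
      y₂ z = (1 / 18) * ((z * z12 z) * deriv (deriv φ) z + z12 z * deriv φ z) ∧
      y₁ z = (z ^ 2 * deriv (deriv (deriv φ)) z + deriv φ z
          + 3 * z * deriv (deriv φ) z - 54 * z ^ 2 * φ z) / (54 * z12 z) := by
  have hr : IsSqrtOn z12 s := ⟨hz12, hz12sq⟩
  have hy₃ := LG24.y₃_eq hs hr hφ hy₄ hode₄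
  have hy₂ := LG24.y₂_eq hs hr hφ' hy₃ hode₃
  have hy₁ := LG24.y₁_eq hs hr hφ' hφ'' hy₄ hy₂ hode₂
  intro D z hz
  exact ⟨LG24.scalar_ode hs hr hφ hφ' hφ'' hy₃ hy₁ hode₁ z hz, hy₃ z hz, hy₂ z hz, hy₁ z hz⟩

/-- Reduction of the quantum differential equation of `LG(2,4)` at `q = 1` to a scalar
fourth-order ODE.  On a simply connected open domain `s ⊆ ℂ*` with a holomorphic choice
`z12` of `√z` (and `z32 z = z^{3/2} = z · √z`), if `y = (y₁,y₂,y₃,y₄)` solves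
`dy/dz = (𝒰 + μ/z) y` with `𝒰` the Euler multiplication matrix and
`μ = diag(−3/2,−1/2,1/2,3/2)`, and `y₄(z) = z^{3/2} φ(z)` with `φ` holomorphic, then `φ`
satisfies `D⁴φ − 108 z³ Dφ − 162 z³ φ = 0` (`D = z d/dz`) and
`y₃ = (1/3) z^{3/2} φ'`, `y₂ = (1/18)(z^{3/2} φ'' + z^{1/2} φ')`,
`y₁ = (z² φ''' + φ' + 3z φ'' − 54 z² φ)/(54 √z)`. -/
theorem LG24_qde_reduction_to_scalar_ODE
    (s : Set ℂ) (hs : IsOpen s) (hs0 : (0 : ℂ) ∉ s)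
    (y₁ y₂ y₃ y₄ φ z12 : ℂ → ℂ)
    (hz12 : DifferentiableOn ℂ z12 s)
    (hz12sq : ∀ z ∈ s, z12 z ^ 2 = z)
    (hφ : DifferentiableOn ℂ φ s)
    (hφ' : DifferentiableOn ℂ (deriv φ) s)
    (hφ'' : DifferentiableOn ℂ (deriv (deriv φ)) s)
    (hy₄ : ∀ z ∈ s, y₄ z = z * z12 z * φ z)
    (hode₁ : ∀ z ∈ s, HasDerivAt y₁ (3 * y₃ z - 3 / (2 * z) * y₁ z) z)
    (hode₂ : ∀ z ∈ s, HasDerivAt y₂ (3 * y₁ z + 3 * y₄ z - 1 / (2 * z) * y₂ z) z)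
    (hode₃ : ∀ z ∈ s, HasDerivAt y₃ (6 * y₂ z + 1 / (2 * z) * y₃ z) z)
    (hode₄ : ∀ z ∈ s, HasDerivAt y₄ (3 * y₃ z + 3 / (2 * z) * y₄ z) z) :
    let D : (ℂ → ℂ) → (ℂ → ℂ) := fun f z => z * deriv f z
    ∀ z ∈ s,
      (D (D (D (D φ))) z - 108 * z ^ 3 * D φ z - 162 * z ^ 3 * φ z = 0) ∧
      y₃ z = (1 / 3) * (z * z12 z) * deriv φ z ∧
      y₂ z = (1 / 18) * ((z * z12 z) * deriv (deriv φ) z + z12 z * deriv φ z) ∧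
      y₁ z = (z ^ 2 * deriv (deriv (deriv φ)) z + deriv φ z
          + 3 * z * deriv (deriv φ) z - 54 * z ^ 2 * φ z) / (54 * z12 z) :=
  LG24_qde_reduction_to_scalar_ODE_general s hs y₁ y₂ y₃ y₄ φ z12 hz12 hz12sq hφ hφ' hφ'' hy₄ hode₁
    hode₂ hode₃ hode₄
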